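/- arXiv:1207.6052 — 2 statements merged into one kernel-verified Lean document; each statement's English description precedes it below -/
import Mathlib

section
/- Let T be an r×n matrix over F₂ whose first s columns form a dense block (entries i.u.d. uniform bits) with 1 ≤ s ≤ min(r, n), and whose remaining columns are arbitrary (possibly dependent). Then for every integer 0 ≤ γ ≤ s−1, Pr{rank(T) < s−γ} ≤ (1−2^{−s})·2^{−γ+s−r} ≤ 2^{−γ+s−r}. -/
/-!
If `rank T < m := s - γ`, the first `m` columns of `T` are dependent, so the dense `r × m` block
`T'` has a kernel vector `w ≠ 0`. For a fixed `w ≠ 0` the map `M ↦ M w` is onto `F₂^r`, so its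
fibres all have size `2^(r(m-1))` and `Pr{T' w = 0} = 2^(-r)`. A union bound over the `2^m - 1`
nonzero vectors gives `(2^m - 1) 2^(-r) = (1 - 2^(-m)) 2^(m-r) ≤ (1 - 2^(-s)) 2^(m-r)`.
-/

open MeasureTheory ProbabilityTheory

instance : MeasurableSpace (ZMod 2) := ⊤

/-- Dense family: i.u.d. uniform Bernoulli entries over F₂. -/
def DenseFamily {Ω : Type*} [MeasureSpace Ω] {ι : Type*} (f : ι → Ω → ZMod 2) : Prop :=
  (∀ i x, (ℙ : Measure Ω) {ω | f i ω = x} = 1 / 2) ∧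
    iIndepFun (m := fun _ : ι => (inferInstance : MeasurableSpace (ZMod 2))) f ℙ

namespace Matrix

variable {m n K : Type*} [Field K]

theorem exists_mulVec_eq_zero_of_rank_lt [Fintype n] (A : Matrix m n K)
    (h : A.rank < Fintype.card n) : ∃ v ≠ 0, A *ᵥ v = 0 := by
  by_contra! hker
  have hinj : Function.Injective A.mulVecLin := by
    rw [← LinearMap.ker_eq_bot, Submodule.eq_bot_iff]
    exact fun v hv => by_contra fun hv0 => hker v hv0 hv
  have : A.rank = Fintype.card n := by
    rw [rank, LinearMap.finrank_range_of_inj hinj, Module.finrank_fintype_fun_eq_card]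
  omega

theorem card_mulVec_eq_zero_mul_card_pow [Finite m] [Fintype n] [Finite K]
    {v : n → K} (hv : v ≠ 0) :
    Nat.card {A : Matrix m n K // A *ᵥ v = 0} * Nat.card K ^ Nat.card m =
      Nat.card K ^ (Nat.card m * Nat.card n) := by
  classical
  obtain ⟨j, hj⟩ := Function.ne_iff.mp hv
  let φ : Matrix m n K →+ (m → K) :=
    { toFun := fun A => A *ᵥ v
      map_zero' := zero_mulVec v
      map_add' := fun A B => add_mulVec A B v }
  have hφ : Function.Surjective φ := fun y =>
    ⟨of fun i k => if k = j then y i / v j else 0, by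
      ext i; simp [φ, mulVec, dotProduct, div_mul_cancel₀ _ hj]⟩
  have key := φ.ker.card_mul_index
  rwa [AddSubgroup.index_ker, AddMonoidHom.range_eq_top.mpr hφ, AddSubgroup.card_top,
    Nat.card_fun, show Nat.card (Matrix m n K) = _ from Nat.card_fun, Nat.card_fun, ← pow_mul,
    mul_comm (Nat.card n)] at key

end Matrix

open scoped ENNReal Matrix

namespace DenseFamily

variable {Ω ι : Type*} [MeasureSpace Ω] {f : ι → Ω → ZMod 2}

theorem precomp (hf : DenseFamily f) {κ : Type*} {g : κ → ι} (hg : g.Injective) :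
    DenseFamily fun k => f (g k) :=
  ⟨fun k => hf.1 (g k), hf.2.precomp hg⟩

theorem measure_fun_eq [Fintype ι] (hf : DenseFamily f) (A : ι → ZMod 2) :
    ℙ {ω | (fun i => f i ω) = A} = 2⁻¹ ^ Fintype.card ι := by
  have hA : {ω | (fun i => f i ω) = A} = ⋂ i ∈ (Finset.univ : Finset ι), f i ⁻¹' {A i} := by
    ext ω; simp [funext_iff]
  rw [hA, hf.2.measure_inter_preimage_eq_mul _ fun _ _ => trivial]
  simp only [Set.preimage, Set.mem_singleton_iff, hf.1, one_div, Finset.prod_const,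
    Finset.card_univ]

theorem measure_le_card_mul [Fintype ι] (hf : DenseFamily f) (p : (ι → ZMod 2) → Prop) :
    ℙ {ω | p fun i => f i ω} ≤ Nat.card {A // p A} * 2⁻¹ ^ Fintype.card ι := by
  classical
  have hp : {ω | p fun i => f i ω} = ⋃ A ∈ Finset.univ.filter p, {ω | (fun i => f i ω) = A} := by
    ext ω; simp
  calc ℙ {ω | p fun i => f i ω}
      ≤ ∑ A ∈ Finset.univ.filter p, ℙ {ω | (fun i => f i ω) = A} :=
        hp ▸ measure_biUnion_finset_le _ _
    _ = Nat.card {A // p A} * 2⁻¹ ^ Fintype.card ι := by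
        simp [hf.measure_fun_eq, Nat.card_eq_fintype_card, Fintype.card_subtype]

variable {R C : Type*} [Fintype R] [Fintype C] {B : Ω → Matrix R C (ZMod 2)}

theorem measure_mulVec_eq_zero_le (hB : DenseFamily fun p : R × C => fun ω => B ω p.1 p.2)
    {w : C → ZMod 2} (hw : w ≠ 0) : ℙ {ω | B ω *ᵥ w = 0} ≤ 2⁻¹ ^ Fintype.card R := by
  have hcard : Nat.card {A : R × C → ZMod 2 // Matrix.of (fun i j => A (i, j)) *ᵥ w = 0} =
      Nat.card {M : Matrix R C (ZMod 2) // M *ᵥ w = 0} :=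
    Nat.card_congr ((Equiv.curry _ _ _).subtypeEquiv fun _ => Iff.rfl)
  have hcount := Matrix.card_mulVec_eq_zero_mul_card_pow (m := R) hw
  set N := Nat.card {M : Matrix R C (ZMod 2) // M *ᵥ w = 0}
  have hN : (N : ℝ≥0∞) * 2 ^ Fintype.card R = 2 ^ (Fintype.card R * Fintype.card C) := by
    simp only [Nat.card_eq_fintype_card, ZMod.card] at hcount
    exact_mod_cast hcount
  have h2 : (2 : ℝ≥0∞) * 2⁻¹ = 1 := ENNReal.mul_inv_cancel two_ne_zero ENNReal.ofNat_ne_top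
  calc ℙ {ω | B ω *ᵥ w = 0}
      ≤ _ := hB.measure_le_card_mul fun A => Matrix.of (fun i j => A (i, j)) *ᵥ w = 0
    _ = N * (2 ^ Fintype.card R * 2⁻¹ ^ Fintype.card R) *
          2⁻¹ ^ (Fintype.card R * Fintype.card C) := by
      rw [hcard, Fintype.card_prod, ← mul_pow, h2, one_pow, mul_one]
    _ = (N * 2 ^ Fintype.card R) * 2⁻¹ ^ (Fintype.card R * Fintype.card C) *
          2⁻¹ ^ Fintype.card R := by
      ring
    _ = 2⁻¹ ^ Fintype.card R := by
      rw [hN, ← mul_pow, h2, one_pow, one_mul]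

theorem measure_exists_mulVec_eq_zero_le
    (hB : DenseFamily fun p : R × C => fun ω => B ω p.1 p.2) :
    ℙ {ω | ∃ w ≠ 0, B ω *ᵥ w = 0} ≤ (2 ^ Fintype.card C - 1) * 2⁻¹ ^ Fintype.card R := by
  classical
  have hU : {ω | ∃ w ≠ 0, B ω *ᵥ w = 0} =
      ⋃ w ∈ Finset.univ.erase (0 : C → ZMod 2), {ω | B ω *ᵥ w = 0} := by
    ext ω; simp
  calc ℙ {ω | ∃ w ≠ 0, B ω *ᵥ w = 0}
      ≤ ∑ w ∈ Finset.univ.erase (0 : C → ZMod 2), ℙ {ω | B ω *ᵥ w = 0} :=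
        hU ▸ measure_biUnion_finset_le _ _
    _ ≤ ∑ w ∈ Finset.univ.erase (0 : C → ZMod 2), (2⁻¹ : ℝ≥0∞) ^ Fintype.card R :=
        Finset.sum_le_sum fun w hw => hB.measure_mulVec_eq_zero_le (Finset.ne_of_mem_erase hw)
    _ = (2 ^ Fintype.card C - 1) * 2⁻¹ ^ Fintype.card R := by
        rw [Finset.sum_const, nsmul_eq_mul, Finset.card_erase_of_mem (Finset.mem_univ _),
          Finset.card_univ, Fintype.card_fun, ZMod.card]
        push_cast [Nat.one_le_two_pow]
        rfl

end DenseFamily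

theorem ENNReal.two_pow_sub_one_mul_inv_pow_le {m s : ℕ} (hms : m ≤ s) (r : ℕ) :
    (2 ^ m - 1 : ℝ≥0∞) * 2⁻¹ ^ r ≤ (1 - 2⁻¹ ^ s) * 2 ^ ((m : ℤ) - r) := by
  have h2 : (2 : ℝ≥0∞) ^ m * 2⁻¹ ^ m = 1 := by
    rw [← mul_pow, ENNReal.mul_inv_cancel two_ne_zero ENNReal.ofNat_ne_top, one_pow]
  have hpow : (2 : ℝ≥0∞) ^ ((m : ℤ) - r) = 2 ^ m * 2⁻¹ ^ r := by
    rw [sub_eq_add_neg, ENNReal.zpow_add two_ne_zero ENNReal.ofNat_ne_top, ENNReal.zpow_neg,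
      zpow_natCast, zpow_natCast, ENNReal.inv_pow]
  calc (2 ^ m - 1 : ℝ≥0∞) * 2⁻¹ ^ r = (1 - 2⁻¹ ^ m) * (2 ^ m * 2⁻¹ ^ r) := by
        rw [ENNReal.sub_mul (c := 2⁻¹ ^ r) fun _ _ => by simp,
          ENNReal.sub_mul (c := 2 ^ m * 2⁻¹ ^ r) fun _ _ => by finiteness,
          one_mul, one_mul, ← mul_assoc, mul_comm (2⁻¹ ^ m), h2, one_mul]
    _ ≤ (1 - 2⁻¹ ^ s) * 2 ^ ((m : ℤ) - r) := by
      rw [hpow]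
      have hinv : (2⁻¹ : ℝ≥0∞) ^ s ≤ 2⁻¹ ^ m :=
        pow_le_pow_of_le_one zero_le (ENNReal.inv_le_one.2 one_le_two) hms
      exact mul_le_mul_left (tsub_le_tsub_left hinv 1) _

theorem stmt_11_general {Ω : Type*} [MeasureSpace Ω]
    (r n s : ℕ) (hsn : s ≤ n)
    (T : Ω → Matrix (Fin r) (Fin n) (ZMod 2))
    (hdense : DenseFamily
      (fun p : Fin r × {j : Fin n // (j : ℕ) < s} => fun ω => T ω p.1 p.2.1))
    (γ : ℕ) (hγ : γ ≤ s - 1) :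
    ℙ {ω | (T ω).rank < s - γ} ≤
        (1 - (2 : ENNReal)⁻¹ ^ s) * (2 : ENNReal) ^ (-(γ : ℤ) + (s : ℤ) - (r : ℤ)) ∧
      (1 - (2 : ENNReal)⁻¹ ^ s) * (2 : ENNReal) ^ (-(γ : ℤ) + (s : ℤ) - (r : ℤ)) ≤
        (2 : ENNReal) ^ (-(γ : ℤ) + (s : ℤ) - (r : ℤ)) := by
  refine ⟨?_, mul_le_of_le_one_left zero_le tsub_le_self⟩
  let firstCols : Fin (s - γ) → {j : Fin n // (j : ℕ) < s} :=
    fun j => ⟨Fin.castLE (by omega) j, j.2.trans_le (Nat.sub_le s γ)⟩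
  have hfirstCols : firstCols.Injective := fun i j h => by simpa [firstCols] using h
  let T' ω := (T ω).submatrix id fun j => (firstCols j).1
  have hT' : DenseFamily fun p : Fin r × Fin (s - γ) => fun ω => T' ω p.1 p.2 :=
    hdense.precomp (Function.injective_id.prodMap hfirstCols)
  calc ℙ {ω | (T ω).rank < s - γ}
      ≤ ℙ {ω | ∃ w ≠ 0, T' ω *ᵥ w = 0} := measure_mono fun ω hω =>
        (T' ω).exists_mulVec_eq_zero_of_rank_lt <| by
          simpa using ((T ω).rank_submatrix_le _ _).trans_lt hω
    _ ≤ (2 ^ (s - γ) - 1) * 2⁻¹ ^ r := by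
        simpa using hT'.measure_exists_mulVec_eq_zero_le
    _ ≤ (1 - 2⁻¹ ^ s) * 2 ^ (((s - γ : ℕ) : ℤ) - r) :=
        ENNReal.two_pow_sub_one_mul_inv_pow_le (Nat.sub_le s γ) r
    _ = (1 - 2⁻¹ ^ s) * 2 ^ (-(γ : ℤ) + s - r) := by
        congr 2; omega

/-- Single-block vertical rank bound: if the first `s` columns of a random `r × n`
matrix `T` over `F₂` form a dense block (`1 ≤ s ≤ min(r,n)`), then for `0 ≤ γ ≤ s−1`,
`Pr{rank T < s−γ} ≤ (1−2^{−s})·2^{−γ+s−r} ≤ 2^{−γ+s−r}`. -/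
theorem stmt_11 {Ω : Type*} [MeasureSpace Ω] [IsProbabilityMeasure (ℙ : Measure Ω)]
    (r n s : ℕ) (hs1 : 1 ≤ s) (hsr : s ≤ r) (hsn : s ≤ n)
    (T : Ω → Matrix (Fin r) (Fin n) (ZMod 2))
    (hdense : DenseFamily
      (fun p : Fin r × {j : Fin n // (j : ℕ) < s} => fun ω => T ω p.1 p.2.1))
    (γ : ℕ) (hγ : γ ≤ s - 1) :
    ℙ {ω | (T ω).rank < s - γ} ≤
        (1 - (2 : ENNReal)⁻¹ ^ s) * (2 : ENNReal) ^ (-(γ : ℤ) + (s : ℤ) - (r : ℤ)) ∧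
      (1 - (2 : ENNReal)⁻¹ ^ s) * (2 : ENNReal) ^ (-(γ : ℤ) + (s : ℤ) - (r : ℤ)) ≤
        (2 : ENNReal) ^ (-(γ : ℤ) + (s : ℤ) - (r : ℤ)) :=
  stmt_11_general r n s hsn T hdense γ hγ
end

section
/- Let s*_τ = ∑_{j=0}^{w*−τ} r*_j with r*_0 = 0 and r*_j ≥ r*_min ≥ r* ≥ 1 for 1 ≤ j ≤ w*. Then s*_τ ≥ (w*−τ)·r*_min for every 0 ≤ τ ≤ w*, and consequently ∑_{j=1}^{n−γ} 2^{−j−s*_{τ(j)}} ≤ (1−2^{−r*})·2^{−w*·r*_min}·∑_{τ'=0}^{u*−1} 2^{(r*_min−r*)·τ'} ≤ u*·(1−2^{−r*})·2^{−w*·r*_min+(r*_min−r*)(u*−1)}, where n = w*·r*, 0 ≤ γ ≤ n−1, u* = ⌈(n−γ)/r*⌉, and τ(j) is the largest integer smaller than j/r*. -/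
/-!
Each `s τ` has `w - τ` summands that are at least `rmin`. The indices `j` with the same
`τ(j) = t` lie in the block `{t r + 1, …, t r + r}`, over which `∑ 2^{-j}` telescopes to
`2^{-t r} (1 - 2^{-r})`; so the block contributes at most
`(1 - 2^{-r}) 2^{-t r - (w - t) rmin} = (1 - 2^{-r}) 2^{-w rmin + (rmin - r) t}`.
The last bound replaces every term of the geometric sum by the largest one.
-/

open Finset

lemma mul_le_sum_range_succ (f : ℕ → ℕ) (c k : ℕ) (hf : ∀ j, 1 ≤ j → j ≤ k → c ≤ f j) :
    k * c ≤ ∑ j ∈ range (k + 1), f j :=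
  calc k * c = #(Icc 1 k) • c := by simp
    _ ≤ ∑ j ∈ Icc 1 k, f j :=
        card_nsmul_le_sum _ _ _ fun j hj => hf j (mem_Icc.1 hj).1 (mem_Icc.1 hj).2
    _ ≤ ∑ j ∈ range (k + 1), f j :=
        sum_le_sum_of_subset fun j hj => mem_range.2 (Nat.lt_succ_of_le (mem_Icc.1 hj).2)

lemma sum_Icc_two_zpow_neg (a b : ℕ) :
    ∑ j ∈ Icc (a + 1) (a + b), (2 : ℝ) ^ (-(j : ℤ)) = 2 ^ (-(a : ℤ)) * (1 - 2 ^ (-(b : ℤ))) := by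
  induction b with
  | zero => simp
  | succ b ih =>
    rw [← add_assoc, sum_Icc_succ_top (by omega), ih]
    push_cast
    rw [show -((a : ℤ) + b + 1) = -a + (-b + -1) by ring, show -((b : ℤ) + 1) = -b + -1 by ring,
      zpow_add₀ two_ne_zero, zpow_add₀ two_ne_zero (-(b : ℤ))]
    ring

lemma mem_Icc_of_sub_one_div_eq {r j t : ℕ} (hr : 0 < r) (hj : 1 ≤ j) (h : (j - 1) / r = t) :
    j ∈ Icc (t * r + 1) (t * r + r) := by
  have hdiv := Nat.div_add_mod (j - 1) r
  have hmod := Nat.mod_lt (j - 1) hr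
  rw [h, mul_comm] at hdiv
  rw [mem_Icc]
  omega

lemma le_toNat_ceil_div_mul (m r : ℕ) (hr : 0 < r) : m ≤ (⌈(m : ℝ) / r⌉).toNat * r := by
  have h := Nat.le_ceil ((m : ℝ) / r)
  rw [← Int.ceil_toNat, div_le_iff₀ (by exact_mod_cast hr)] at h
  exact_mod_cast h

lemma sum_Icc_two_zpow_le_sum_blocks {r m u : ℕ} (hr : 0 < r) (hm : m ≤ u * r) (e : ℕ → ℤ) :
    ∑ j ∈ Icc 1 m, (2 : ℝ) ^ (-(j : ℤ) - e ((j - 1) / r)) ≤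
      (1 - 2 ^ (-(r : ℤ))) * ∑ t ∈ range u, (2 : ℝ) ^ (-((t * r : ℕ) : ℤ) - e t) := by
  have hmaps : ∀ j ∈ Icc 1 m, (j - 1) / r ∈ range u := fun j hj => by
    rw [mem_range, Nat.div_lt_iff_lt_mul hr]
    have := mem_Icc.1 hj
    omega
  rw [← sum_fiberwise_of_maps_to hmaps, mul_sum]
  refine sum_le_sum fun t _ => ?_
  calc ∑ j ∈ (Icc 1 m).filter (fun j => (j - 1) / r = t), (2 : ℝ) ^ (-(j : ℤ) - e ((j - 1) / r))
      = ∑ j ∈ (Icc 1 m).filter (fun j => (j - 1) / r = t), (2 : ℝ) ^ (-(j : ℤ) - e t) :=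
        sum_congr rfl fun j hj => by rw [(mem_filter.1 hj).2]
    _ ≤ ∑ j ∈ Icc (t * r + 1) (t * r + r), (2 : ℝ) ^ (-(j : ℤ) - e t) := by
        refine sum_le_sum_of_subset_of_nonneg (fun j hj => ?_) fun _ _ _ => by positivity
        obtain ⟨hj, hjt⟩ := mem_filter.1 hj
        exact mem_Icc_of_sub_one_div_eq hr (mem_Icc.1 hj).1 hjt
    _ = (1 - 2 ^ (-(r : ℤ))) * (2 : ℝ) ^ (-((t * r : ℕ) : ℤ) - e t) := by
        simp_rw [sub_eq_add_neg _ (e t), zpow_add₀ (two_ne_zero' ℝ), ← sum_mul,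
          sum_Icc_two_zpow_neg]
        ring

lemma sum_range_pow_le_mul_zpow {x : ℝ} (hx : 1 ≤ x) (k : ℕ) :
    ∑ i ∈ range k, x ^ i ≤ k * x ^ ((k : ℤ) - 1) := by
  rcases k with _ | k
  · simp
  · calc ∑ i ∈ range (k + 1), x ^ i ≤ #(range (k + 1)) • x ^ k :=
          sum_le_card_nsmul _ _ _ fun i hi =>
            pow_le_pow_right₀ hx (Nat.lt_succ_iff.1 (mem_range.1 hi))
      _ = _ := by simp [← zpow_natCast]

theorem stmt_13_general (w r rmin n γ : ℕ) (rl : ℕ → ℕ)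
    (hr : 1 ≤ r) (hrmin : r ≤ rmin)
    (hrl : ∀ j, 1 ≤ j → j ≤ w → rmin ≤ rl j) :
    let s : ℕ → ℕ := fun τ => ∑ j ∈ Finset.range (w - τ + 1), rl j
    let u : ℕ := (⌈((n - γ : ℕ) : ℝ) / (r : ℝ)⌉).toNat
    (∀ τ, τ ≤ w → (w - τ) * rmin ≤ s τ) ∧
    (∑ j ∈ Finset.Icc 1 (n - γ), (2 : ℝ) ^ (-(j : ℤ) - (s ((j - 1) / r) : ℤ)) ≤
      (1 - (2 : ℝ) ^ (-(r : ℤ))) * (2 : ℝ) ^ (-((w * rmin : ℕ) : ℤ)) *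
        ∑ τ' ∈ Finset.range u, (2 : ℝ) ^ ((rmin - r) * τ' : ℕ)) ∧
    ((1 - (2 : ℝ) ^ (-(r : ℤ))) * (2 : ℝ) ^ (-((w * rmin : ℕ) : ℤ)) *
        ∑ τ' ∈ Finset.range u, (2 : ℝ) ^ ((rmin - r) * τ' : ℕ) ≤
      (u : ℝ) * (1 - (2 : ℝ) ^ (-(r : ℤ))) *
        (2 : ℝ) ^ (-((w * rmin : ℕ) : ℤ) + ((rmin : ℤ) - (r : ℤ)) * ((u : ℤ) - 1))) := by
  intro s u
  have hs (τ : ℕ) : (w - τ) * rmin ≤ s τ :=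
    mul_le_sum_range_succ rl rmin (w - τ) fun j hj1 hj2 => hrl j hj1 (by omega)
  have hfactor : 0 ≤ 1 - (2 : ℝ) ^ (-(r : ℤ)) :=
    sub_nonneg.2 (zpow_le_one_of_nonpos₀ one_le_two (by omega))
  refine ⟨fun τ _ => hs τ, ?_, ?_⟩
  · calc _ ≤ (1 - 2 ^ (-(r : ℤ))) * ∑ t ∈ range u, (2 : ℝ) ^ (-((t * r : ℕ) : ℤ) - s t) :=
          sum_Icc_two_zpow_le_sum_blocks hr (le_toNat_ceil_div_mul _ _ hr) _
      _ ≤ _ := by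
        rw [mul_assoc, mul_sum (range u) _ (2 ^ _)]
        refine mul_le_mul_of_nonneg_left (sum_le_sum fun t _ => ?_) hfactor
        rw [← zpow_natCast, ← zpow_add₀ two_ne_zero]
        refine zpow_le_zpow_right₀ one_le_two ?_
        have hst : (((w - t) * rmin : ℕ) : ℤ) ≤ s t := by exact_mod_cast hs t
        have hwt : (w : ℤ) - t ≤ ((w - t : ℕ) : ℤ) := by omega
        push_cast [Nat.cast_sub hrmin] at hst ⊢
        nlinarith
  · calc _ ≤ (1 - 2 ^ (-(r : ℤ))) * (2 : ℝ) ^ (-((w * rmin : ℕ) : ℤ)) *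
            (u * ((2 : ℝ) ^ (rmin - r)) ^ ((u : ℤ) - 1)) := by
          refine mul_le_mul_of_nonneg_left ?_ (mul_nonneg hfactor (by positivity))
          simp_rw [pow_mul]
          exact sum_range_pow_le_mul_zpow (one_le_pow₀ one_le_two) u
      _ = _ := by
        rw [← zpow_natCast, ← zpow_mul, zpow_add₀ two_ne_zero, Nat.cast_sub hrmin]
        ring

/-- Summation estimate from the horizontal RBLT rank lemma. With `r*_0 = 0`,
`rl j ≥ rmin ≥ r ≥ 1` for `1 ≤ j ≤ w`, `s τ = ∑_{j=0}^{w−τ} rl j`, `n = w·r`,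
`0 ≤ γ ≤ n−1`, `u = ⌈(n−γ)/r⌉` and `τ(j)` the largest integer smaller than `j/r`
(so `τ(j) = (j−1)/r` for `j ≥ 1`): `s τ ≥ (w−τ)·rmin` for all `τ ≤ w`, and
`∑_{j=1}^{n−γ} 2^{−j−s(τ(j))} ≤ (1−2^{−r})·2^{−w·rmin}·∑_{τ'=0}^{u−1} 2^{(rmin−r)τ'}
 ≤ u·(1−2^{−r})·2^{−w·rmin+(rmin−r)(u−1)}`. -/
theorem stmt_13 (w r rmin n γ : ℕ) (rl : ℕ → ℕ)
    (hr : 1 ≤ r) (hrmin : r ≤ rmin)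
    (h0 : rl 0 = 0) (hrl : ∀ j, 1 ≤ j → j ≤ w → rmin ≤ rl j)
    (hn : n = w * r) (hn1 : 1 ≤ n) (hγ : γ ≤ n - 1) :
    let s : ℕ → ℕ := fun τ => ∑ j ∈ Finset.range (w - τ + 1), rl j
    let u : ℕ := (⌈((n - γ : ℕ) : ℝ) / (r : ℝ)⌉).toNat
    (∀ τ, τ ≤ w → (w - τ) * rmin ≤ s τ) ∧
    (∑ j ∈ Finset.Icc 1 (n - γ), (2 : ℝ) ^ (-(j : ℤ) - (s ((j - 1) / r) : ℤ)) ≤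
      (1 - (2 : ℝ) ^ (-(r : ℤ))) * (2 : ℝ) ^ (-((w * rmin : ℕ) : ℤ)) *
        ∑ τ' ∈ Finset.range u, (2 : ℝ) ^ ((rmin - r) * τ' : ℕ)) ∧
    ((1 - (2 : ℝ) ^ (-(r : ℤ))) * (2 : ℝ) ^ (-((w * rmin : ℕ) : ℤ)) *
        ∑ τ' ∈ Finset.range u, (2 : ℝ) ^ ((rmin - r) * τ' : ℕ) ≤
      (u : ℝ) * (1 - (2 : ℝ) ^ (-(r : ℤ))) *
        (2 : ℝ) ^ (-((w * rmin : ℕ) : ℤ) + ((rmin : ℤ) - (r : ℤ)) * ((u : ℤ) - 1))) :=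
  stmt_13_general w r rmin n γ rl hr hrmin hrl
end
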